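/- arXiv:2101.06473 — 2 statements merged into one kernel-verified Lean document; each statement's English description precedes it below -/
import Mathlib

section
/- Let X be a compact metric space, T : X → X a homeomorphism, and μ a strictly positive T-invariant ergodic Borel probability measure. If for every sequence (U_k) of open sets of positive measure and every f ∈ C(X) the averages (1/μ(U_k)) ∫_{U_k} (1/k)∑_{i=0}^{k-1} f∘T^i dμ converge to ∫ f dμ, then (X, T) is uniquely ergodic. -/
open MeasureTheory Filter Finset Topology
open scoped ENNReal

/-!
If `ν ≠ μ` is another invariant probability measure, pick `f ∈ C(X)` and `b` with
`∫ f dμ < b < ∫ f dν`. Every Birkhoff average `A_k f` has `ν`-integral `∫ f dν > b`, so the open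
set `{A_k f > b}` is nonempty and hence has positive `μ`-measure. The `μ`-averages of `A_k f`
over these sets are `≥ b`, so they cannot converge to `∫ f dμ < b`.
-/

theorem exists_continuousMap_integral_lt_of_ne {X : Type*} [TopologicalSpace X] [CompactSpace X]
    [HasOuterApproxClosed X] [MeasurableSpace X] [BorelSpace X]
    {μ ν : Measure X} [IsFiniteMeasure μ] [IsFiniteMeasure ν] (hne : μ ≠ ν) :
    ∃ f : C(X, ℝ), ∫ x, f x ∂μ < ∫ x, f x ∂ν := by
  by_contra! h
  refine hne (ext_of_forall_integral_eq_of_IsFiniteMeasure fun f => ?_)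
  have hneg := h (-f.toContinuousMap)
  simp only [ContinuousMap.neg_apply, integral_neg, neg_le_neg_iff] at hneg
  exact le_antisymm hneg (h f.toContinuousMap)

section BirkhoffAverage

variable {α E : Type*} [NormedAddCommGroup E] [NormedSpace ℝ E]

theorem continuous_birkhoffAverage [TopologicalSpace α] {f : α → α} {g : α → E}
    (hf : Continuous f) (hg : Continuous g) (n : ℕ) : Continuous (birkhoffAverage ℝ f g n) :=
  continuous_const.smul (continuous_finsetSum _ fun i _ => hg.comp (hf.iterate i))

theorem MeasureTheory.MeasurePreserving.integral_birkhoffAverage [MeasurableSpace α]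
    [CompleteSpace E] {ν : Measure α} {f : α → α} (hf : MeasurePreserving f ν ν) {g : α → E}
    (hg : Integrable g ν) {n : ℕ} (hn : n ≠ 0) :
    ∫ x, birkhoffAverage ℝ f g n x ∂ν = ∫ x, g x ∂ν := by
  have hiter (i : ℕ) : ∫ x, g (f^[i] x) ∂ν = ∫ x, g x ∂ν := by
    have hmeas : AEStronglyMeasurable g (ν.map f^[i]) := by
      rw [(hf.iterate i).map_eq]; exact hg.aestronglyMeasurable
    rw [← integral_map (hf.iterate i).measurable.aemeasurable hmeas, (hf.iterate i).map_eq]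
  simp only [birkhoffAverage, birkhoffSum]
  rw [integral_smul, integral_finsetSum]
  · simp only [hiter, sum_const, card_range]
    rw [← Nat.cast_smul_eq_nsmul ℝ, inv_smul_smul₀ (Nat.cast_ne_zero.2 hn)]
  · exact fun i _ => (hf.iterate i).integrable_comp_of_integrable hg

end BirkhoffAverage

theorem Continuous.integrable_of_compactSpace {X E : Type*} [TopologicalSpace X] [CompactSpace X]
    [MeasurableSpace X] [OpensMeasurableSpace X] [NormedAddCommGroup E] {μ : Measure X}
    [IsFiniteMeasure μ] {g : X → E} (hg : Continuous g) : Integrable g μ :=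
  hg.integrable_of_hasCompactSupport (.of_compactSpace g)

theorem le_setAverage_of_forall_le {α : Type*} [MeasurableSpace α] {μ : Measure α} {s : Set α}
    {g : α → ℝ} {b : ℝ} (hs : MeasurableSet s) (h0 : μ s ≠ 0) (hfin : μ s ≠ ∞)
    (hg : IntegrableOn g s μ) (hb : ∀ x ∈ s, b ≤ g x) : b ≤ ⨍ x in s, g x ∂μ := by
  have hpos : 0 < μ.real s := ENNReal.toReal_pos h0 hfin
  rw [setAverage_eq, smul_eq_mul, le_inv_mul_iff₀ hpos, mul_comm]
  exact setIntegral_ge_of_const_le_real hs hfin hb hg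

theorem uniquelyErgodic_of_spatial_temporal_open_general
    {X : Type*} [MetricSpace X] [CompactSpace X] [MeasurableSpace X] [BorelSpace X]
    (μ : Measure X) [IsProbabilityMeasure μ] [μ.IsOpenPosMeasure]
    (T : X ≃ₜ X)
    (hconv : ∀ U : ℕ → Set X, (∀ k, IsOpen (U k)) → (∀ k, 0 < μ (U k)) →
      ∀ f : C(X, ℝ),
        Tendsto (fun k : ℕ => (μ (U k)).toReal⁻¹ *
            ∫ x in U k, (k : ℝ)⁻¹ * ∑ i ∈ range k, f ((⇑T)^[i] x) ∂μ)
          atTop (𝓝 (∫ x, f x ∂μ))) :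
    ∀ ν : Measure X, IsProbabilityMeasure ν → MeasurePreserving (⇑T) ν ν → ν = μ := by
  intro ν _ hν
  by_contra hne
  obtain ⟨f, hf⟩ := exists_continuousMap_integral_lt_of_ne (Ne.symm hne)
  obtain ⟨b, hμb, hbν⟩ := exists_between hf
  set A := birkhoffAverage ℝ T f
  have hA_cont (k : ℕ) : Continuous (A k) :=
    continuous_birkhoffAverage T.continuous f.continuous k
  -- `A 0 = 0`, so `{b < A 0}` may be empty; `max k 1` keeps every `U k` nonempty.
  set U : ℕ → Set X := fun k => {x | b < A (max k 1) x}
  have hU_open (k : ℕ) : IsOpen (U k) := isOpen_lt continuous_const (hA_cont _)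
  have hU_pos (k : ℕ) : 0 < μ (U k) := by
    obtain ⟨x, hx⟩ := exists_integral_le (μ := ν) (hA_cont (max k 1)).integrable_of_compactSpace
    rw [hν.integral_birkhoffAverage f.continuous.integrable_of_compactSpace (by positivity)] at hx
    exact (hU_open k).measure_pos μ ⟨x, hbν.trans_le hx⟩
  refine hμb.not_ge (ge_of_tendsto (hconv U hU_open hU_pos f) ?_)
  filter_upwards [eventually_ge_atTop 1] with k hk
  calc b ≤ ⨍ x in U k, A k x ∂μ :=
        le_setAverage_of_forall_le (hU_open k).measurableSet (hU_pos k).ne' (measure_ne_top μ _)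
          (hA_cont k).integrable_of_compactSpace.integrableOn
          fun x (hx : b < A (max k 1) x) => max_eq_left hk ▸ hx.le
    _ = _ := by rw [setAverage_eq]; rfl

/-- (3) ⇒ (1) of Theorem: if `μ` is strictly positive and all spatial-temporal
differentiations of continuous functions along open sets of positive measure
converge to the space average, then `(X, T)` is uniquely ergodic. -/
theorem uniquelyErgodic_of_spatial_temporal_open
    {X : Type*} [MetricSpace X] [CompactSpace X] [MeasurableSpace X] [BorelSpace X]
    (μ : Measure X) [IsProbabilityMeasure μ] [μ.IsOpenPosMeasure]
    (T : X ≃ₜ X) (hErg : Ergodic (⇑T) μ)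
    (hconv : ∀ U : ℕ → Set X, (∀ k, IsOpen (U k)) → (∀ k, 0 < μ (U k)) →
      ∀ f : C(X, ℝ),
        Tendsto (fun k : ℕ => (μ (U k)).toReal⁻¹ *
            ∫ x in U k, (k : ℝ)⁻¹ * ∑ i ∈ range k, f ((⇑T)^[i] x) ∂μ)
          atTop (𝓝 (∫ x, f x ∂μ))) :
    ∀ ν : Measure X, IsProbabilityMeasure ν → MeasurePreserving (⇑T) ν ν → ν = μ :=
  uniquelyErgodic_of_spatial_temporal_open_general μ T hconv
end

section
/- Let X = 𝒟^ℤ be a Bernoulli shift on a finite alphabet with strictly positive probability vector, left shift T, μ the product measure, and f = χ_{[0]}. Then there exists x ∈ X such that the sequence ((1/μ(C_k(x))) ∫_{C_k(x)} (1/k)∑_{i=0}^{k-1} f∘T^i dμ)_{k≥1} is not Cauchy; specifically its liminf is ≤ 1/3 and its limsup is ≥ 2/3. -/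
open MeasureTheory Filter Finset Topology

/-!
Take `x i = 0` exactly when `⌊log₂ (i + 1)⌋` is odd, so that the zeros and non-zeros of `x`
come in alternating runs of lengths `1, 2, 4, 8, …`. On the cylinder `C_k(x)` the Birkhoff
average of `χ_{[0]}` is constant, equal to the frequency of zeros among `x 0, …, x (k - 1)`, and
the cylinder has positive measure, so the sequence is just that frequency. At the end of a run
of non-zeros (`k = 2 ^ (2j + 1) - 1`) the frequency is at most `1/3`; at the end of a run of
zeros (`k = 2 ^ (2j + 2) - 1`) it is exactly `2/3`.
-/

def InOddDyadicBlock (i : ℕ) : Prop := Odd (Nat.log 2 (i + 1))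

instance : DecidablePred InOddDyadicBlock := fun _ => inferInstanceAs (Decidable (Odd _))

lemma Nat.log_two_pow_add {m k : ℕ} (hk : k < 2 ^ m) : Nat.log 2 (2 ^ m + k) = m :=
  Nat.log_eq_of_pow_le_of_lt_pow (by omega) (by rw [pow_succ]; omega)

lemma count_inOddDyadicBlock_two_pow_succ_sub_one (m : ℕ) :
    Nat.count InOddDyadicBlock (2 ^ (m + 1) - 1) =
      Nat.count InOddDyadicBlock (2 ^ m - 1) + if Odd m then 2 ^ m else 0 := by
  have hpos := Nat.one_le_two_pow (n := m)
  have hblock : ∀ k < 2 ^ m, InOddDyadicBlock (2 ^ m - 1 + k) ↔ Odd m := fun k hk => by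
    rw [InOddDyadicBlock, show 2 ^ m - 1 + k + 1 = 2 ^ m + k by omega, Nat.log_two_pow_add hk]
  rw [show 2 ^ (m + 1) - 1 = 2 ^ m - 1 + 2 ^ m by rw [pow_succ]; omega, Nat.count_add]
  split_ifs with hm
  · exact congrArg _ (Nat.count_of_forall fun k hk => (hblock k hk).2 hm)
  · exact congrArg _ (Nat.count_of_forall_not fun k hk h => hm ((hblock k hk).1 h))

lemma count_inOddDyadicBlock_two_pow_odd_sub_one (j : ℕ) :
    Nat.count InOddDyadicBlock (2 ^ (2 * j + 1) - 1) =
      Nat.count InOddDyadicBlock (2 ^ (2 * j) - 1) := by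
  simp [count_inOddDyadicBlock_two_pow_succ_sub_one]

lemma three_mul_count_inOddDyadicBlock_two_pow_even_sub_one (j : ℕ) :
    3 * Nat.count InOddDyadicBlock (2 ^ (2 * j) - 1) + 2 = 2 ^ (2 * j + 1) := by
  induction j with
  | zero => simp
  | succ j ih =>
    have hstep : Nat.count InOddDyadicBlock (2 ^ (2 * j + 2) - 1) =
        Nat.count InOddDyadicBlock (2 ^ (2 * j) - 1) + 2 ^ (2 * j + 1) := by
      rw [count_inOddDyadicBlock_two_pow_succ_sub_one, if_pos (odd_two_mul_add_one j),
        count_inOddDyadicBlock_two_pow_odd_sub_one]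
    rw [show 2 * (j + 1) = 2 * j + 2 by ring, hstep, pow_succ 2 (2 * j + 2),
      pow_succ 2 (2 * j + 1)]
    omega

noncomputable def oddDyadicFreq (k : ℕ) : ℝ := Nat.count InOddDyadicBlock k / k

lemma oddDyadicFreq_mem_Icc (k : ℕ) : oddDyadicFreq k ∈ Set.Icc 0 1 :=
  ⟨by unfold oddDyadicFreq; positivity,
    div_le_one_of_le₀ (by exact_mod_cast Nat.count_le _) (Nat.cast_nonneg k)⟩

lemma oddDyadicFreq_two_pow_odd_sub_one_le (j : ℕ) :
    oddDyadicFreq (2 ^ (2 * j + 1) - 1) ≤ 1 / 3 := by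
  have h := three_mul_count_inOddDyadicBlock_two_pow_even_sub_one j
  rw [← count_inOddDyadicBlock_two_pow_odd_sub_one] at h
  have hpos : 2 ≤ 2 ^ (2 * j + 1) := Nat.le_self_pow (by omega) 2
  have hk : (0 : ℝ) < (2 ^ (2 * j + 1) - 1 : ℕ) := by exact_mod_cast (by omega)
  rw [oddDyadicFreq, div_le_iff₀ hk]
  have : 3 * (Nat.count InOddDyadicBlock (2 ^ (2 * j + 1) - 1) : ℝ) + 1 =
      (2 ^ (2 * j + 1) - 1 : ℕ) := by exact_mod_cast (by omega : _)
  linarith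

lemma oddDyadicFreq_two_pow_even_sub_one (j : ℕ) :
    oddDyadicFreq (2 ^ (2 * j + 2) - 1) = 2 / 3 := by
  have h := three_mul_count_inOddDyadicBlock_two_pow_even_sub_one (j + 1)
  have hpos : 2 ≤ 2 ^ (2 * j + 2) := Nat.le_self_pow (by omega) 2
  rw [show 2 * (j + 1) = 2 * j + 2 by ring] at h
  have hk : (0 : ℝ) < (2 ^ (2 * j + 2) - 1 : ℕ) := by exact_mod_cast (by omega)
  rw [oddDyadicFreq, div_eq_iff hk.ne']
  have : 3 * (Nat.count InOddDyadicBlock (2 ^ (2 * j + 2) - 1) : ℝ) =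
      2 * (2 ^ (2 * j + 2) - 1 : ℕ) := by exact_mod_cast (by omega : _)
  linarith

lemma frequently_oddDyadicFreq_le : ∃ᶠ k in atTop, oddDyadicFreq k ≤ 1 / 3 :=
  frequently_atTop.2 fun a => ⟨2 ^ (2 * a + 1) - 1, by
    have := Nat.lt_two_pow_self (n := a)
    have := Nat.pow_le_pow_right (n := 2) (by norm_num) (by omega : a ≤ 2 * a + 1)
    omega, oddDyadicFreq_two_pow_odd_sub_one_le a⟩

lemma frequently_le_oddDyadicFreq : ∃ᶠ k in atTop, 2 / 3 ≤ oddDyadicFreq k :=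
  frequently_atTop.2 fun a => ⟨2 ^ (2 * a + 2) - 1, by
    have := Nat.lt_two_pow_self (n := a)
    have := Nat.pow_le_pow_right (n := 2) (by norm_num) (by omega : a ≤ 2 * a + 2)
    omega, (oddDyadicFreq_two_pow_even_sub_one a).ge⟩

lemma not_cauchySeq_of_frequently_le_of_frequently_ge {u : ℕ → ℝ} {a b : ℝ} (hab : a < b)
    (ha : ∃ᶠ k in atTop, u k ≤ a) (hb : ∃ᶠ k in atTop, b ≤ u k) : ¬ CauchySeq u := by
  intro hu
  obtain ⟨L, hL⟩ := cauchySeq_tendsto_of_complete hu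
  have hLa : L ≤ a := isClosed_Iic.mem_of_frequently_of_tendsto ha hL
  have hLb : b ≤ L := isClosed_Ici.mem_of_frequently_of_tendsto hb hL
  linarith

lemma oddDyadicFreq_oscillates :
    ¬ CauchySeq oddDyadicFreq ∧ liminf oddDyadicFreq atTop ≤ 1 / 3 ∧
      2 / 3 ≤ limsup oddDyadicFreq atTop :=
  ⟨not_cauchySeq_of_frequently_le_of_frequently_ge (by norm_num) frequently_oddDyadicFreq_le
      frequently_le_oddDyadicFreq,
    liminf_le_of_frequently_le frequently_oddDyadicFreq_le
      (isBoundedUnder_of_eventually_ge (.of_forall fun k => (oddDyadicFreq_mem_Icc k).1)),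
    le_limsup_of_frequently_le frequently_le_oddDyadicFreq
      (isBoundedUnder_of_eventually_le (.of_forall fun k => (oddDyadicFreq_mem_Icc k).2))⟩

section Shift

variable {α : Type*}

def prefixCylinder (x : ℤ → α) (k : ℕ) : Set (ℤ → α) :=
  {y | ∀ i : ℕ, i < k → y i = x i}

lemma measurableSet_prefixCylinder [MeasurableSpace α] [MeasurableSingletonClass α]
    (x : ℤ → α) (k : ℕ) : MeasurableSet (prefixCylinder x k) := by
  simp only [prefixCylinder, Set.ofPred_forall]
  exact .iInter fun i => .iInter fun _ => measurable_pi_apply _ (measurableSet_singleton _)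

lemma measure_prefixCylinder_ne_zero [MeasurableSpace α] {μ : Measure (ℤ → α)}
    {p : α → ENNReal} (hp : ∀ d, 0 < p d)
    (hμ : ∀ (m : ℤ) (ℓ : ℕ) (a : Fin ℓ → α),
      μ {x : ℤ → α | ∀ j : Fin ℓ, x (m + (j : ℤ)) = a j} = ∏ j, p (a j))
    (x : ℤ → α) (k : ℕ) : μ (prefixCylinder x k) ≠ 0 := by
  have hcyl : prefixCylinder x k = {y : ℤ → α | ∀ j : Fin k, y (0 + (j : ℤ)) = x j} := by
    ext y
    simp only [prefixCylinder, Set.mem_ofPred_eq, zero_add]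
    exact ⟨fun h j => h j j.isLt, fun h i hi => h ⟨i, hi⟩⟩
  rw [hcyl, hμ]
  exact prod_ne_zero_iff.2 fun j _ => (hp _).ne'

variable {S : (ℤ → α) → (ℤ → α)}

lemma iterate_shift_apply (hS : ∀ y m, S y m = y (m + 1)) (y : ℤ → α) (i : ℕ) (m : ℤ) :
    S^[i] y m = y (m + i) := by
  induction i generalizing m with
  | zero => simp
  | succ i ih => rw [Function.iterate_succ_apply', hS, ih]; push_cast; ring_nf

lemma birkhoffSum_indicator_eq_count [DecidableEq α] (hS : ∀ y m, S y m = y (m + 1)) (a : α)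
    {x y : ℤ → α} {k : ℕ} (hy : y ∈ prefixCylinder x k) :
    birkhoffSum S ({z | z 0 = a}.indicator fun _ => (1 : ℝ)) k y =
      Nat.count (fun i : ℕ => x i = a) k := by
  rw [Nat.count_eq_card_filter_range, natCast_card_filter]
  refine sum_congr rfl fun i hi => ?_
  simp only [Set.indicator_apply, Set.mem_ofPred_eq, iterate_shift_apply hS, zero_add,
    hy i (mem_range.1 hi)]

lemma setAverage_birkhoffAverage_prefixCylinder [MeasurableSpace α] [MeasurableSingletonClass α]
    [DecidableEq α] {μ : Measure (ℤ → α)} [IsFiniteMeasure μ]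
    (hS : ∀ y m, S y m = y (m + 1)) (a : α) {x : ℤ → α} {k : ℕ}
    (hμ : μ (prefixCylinder x k) ≠ 0) :
    ⨍ y in prefixCylinder x k,
        birkhoffAverage ℝ S ({z | z 0 = a}.indicator fun _ => (1 : ℝ)) k y ∂μ =
      Nat.count (fun i : ℕ => x i = a) k / k := by
  rw [setAverage_congr_fun (measurableSet_prefixCylinder x k) (.of_forall fun y hy => by
      rw [birkhoffAverage, birkhoffSum_indicator_eq_count hS a hy]),
    setAverage_const hμ (measure_ne_top _ _), smul_eq_mul, inv_mul_eq_div]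

end Shift

/-- In a full Bernoulli shift with strictly positive probability vector, there
is a point `x` whose spatial-temporal differentiation sequence for
`f = χ_{[0]}` is not Cauchy: its liminf is `≤ 1/3` and its limsup is `≥ 2/3`. -/
theorem bernoulli_pathological_point
    (n : ℕ) (hn : 2 ≤ n)
    (p : Fin n → ENNReal) (hp : ∀ d, 0 < p d)
    (μ : Measure (ℤ → Fin n)) [IsProbabilityMeasure μ]
    (hμ : ∀ (m : ℤ) (ℓ : ℕ) (a : Fin ℓ → Fin n),
      μ {x : ℤ → Fin n | ∀ j : Fin ℓ, x (m + (j : ℤ)) = a j} = ∏ j, p (a j))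
    (S : (ℤ → Fin n) → (ℤ → Fin n)) (hS : ∀ y m, S y m = y (m + 1)) :
    ∃ x : ℤ → Fin n,
      ¬ CauchySeq (fun k : ℕ =>
          (μ {y : ℤ → Fin n | ∀ i : ℕ, i < k → y (i : ℤ) = x (i : ℤ)}).toReal⁻¹ *
            ∫ y in {y : ℤ → Fin n | ∀ i : ℕ, i < k → y (i : ℤ) = x (i : ℤ)},
              (k : ℝ)⁻¹ * ∑ i ∈ range k,
                Set.indicator {z : ℤ → Fin n | z 0 = (⟨0, by omega⟩ : Fin n)}
                  (fun _ => (1 : ℝ)) (S^[i] y) ∂μ) ∧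
      liminf (fun k : ℕ =>
          (μ {y : ℤ → Fin n | ∀ i : ℕ, i < k → y (i : ℤ) = x (i : ℤ)}).toReal⁻¹ *
            ∫ y in {y : ℤ → Fin n | ∀ i : ℕ, i < k → y (i : ℤ) = x (i : ℤ)},
              (k : ℝ)⁻¹ * ∑ i ∈ range k,
                Set.indicator {z : ℤ → Fin n | z 0 = (⟨0, by omega⟩ : Fin n)}
                  (fun _ => (1 : ℝ)) (S^[i] y) ∂μ) atTop ≤ 1 / 3 ∧
      2 / 3 ≤ limsup (fun k : ℕ =>
          (μ {y : ℤ → Fin n | ∀ i : ℕ, i < k → y (i : ℤ) = x (i : ℤ)}).toReal⁻¹ *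
            ∫ y in {y : ℤ → Fin n | ∀ i : ℕ, i < k → y (i : ℤ) = x (i : ℤ)},
              (k : ℝ)⁻¹ * ∑ i ∈ range k,
                Set.indicator {z : ℤ → Fin n | z 0 = (⟨0, by omega⟩ : Fin n)}
                  (fun _ => (1 : ℝ)) (S^[i] y) ∂μ) atTop := by
  set zero : Fin n := ⟨0, by omega⟩
  let x : ℤ → Fin n := fun m => if InOddDyadicBlock m.toNat then zero else ⟨1, by omega⟩
  have hcount (k : ℕ) :
      Nat.count (fun i : ℕ => x i = zero) k = Nat.count InOddDyadicBlock k := by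
    simp only [Nat.count_eq_card_filter_range]
    congr 1
    refine filter_congr fun i _ => ?_
    by_cases h : InOddDyadicBlock i <;> simp [x, zero, h]
  have hseq (k : ℕ) : (μ (prefixCylinder x k)).toReal⁻¹ * ∫ y in prefixCylinder x k,
      birkhoffAverage ℝ S ({z | z 0 = zero}.indicator fun _ => (1 : ℝ)) k y ∂μ =
        oddDyadicFreq k := by
    rw [← measureReal_def, ← smul_eq_mul, ← setAverage_eq,
      setAverage_birkhoffAverage_prefixCylinder hS zero (measure_prefixCylinder_ne_zero hp hμ x k),
      hcount, oddDyadicFreq]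
  obtain ⟨hcauchy, hliminf, hlimsup⟩ := oddDyadicFreq_oscillates
  rw [← funext hseq] at hcauchy hliminf hlimsup
  exact ⟨x, hcauchy, hliminf, hlimsup⟩
end
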